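/- Let α_1, α_2 ∈ (1,2), let n_1, n_2 ≥ 1 be integers, let c_x, c_y > 0, set N = n_1 n_2, let A = c_x (I_{n_2} ⊗ G_{n_1}^{(α_1)}) + c_y (G_{n_2}^{(α_2)} ⊗ I_{n_1}), let τ_1(A) = c_x (I_{n_2} ⊗ τ(G_{n_1}^{(α_1)})) + c_y (τ(G_{n_2}^{(α_2)}) ⊗ I_{n_1}), and let D be an N×N diagonal matrix with nonnegative diagonal entries. Then, with M = I_N - A + D and P = I_N - τ_1(A) + D, every eigenvalue λ of the preconditioned matrix P^{-1} M is real and uniformly bounded: 1/2 < λ < 3/2. -/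

import Mathlib

/-- Grünwald–Letnikov coefficients: `g α 0 = 1`,
`g α l = (1 - (α+1)/l) * g α (l-1)` for `l ≥ 1`. -/
noncomputable def g (α : ℝ) : ℕ → ℝ
  | 0 => 1
  | l + 1 => (1 - (α + 1) / ((l : ℝ) + 1)) * g α l


/-- First column (Toeplitz symbol) of `G_n^{(α)}`: entry at distance `d` is
`2 g₁` if `d = 0`, `g₀ + g₂` if `d = 1`, and `g_{d+1}` if `d ≥ 2`. -/
noncomputable def gSymb (α : ℝ) : ℕ → ℝ
  | 0 => 2 * g α 1
  | 1 => g α 0 + g α 2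
  | d + 2 => g α (d + 3)

/-- The symmetric Toeplitz matrix `G_n^{(α)}`. -/
noncomputable def Gmat (α : ℝ) (n : ℕ) : Matrix (Fin n) (Fin n) ℝ :=
  Matrix.of fun i j => gSymb α (((i : ℤ) - (j : ℤ)).natAbs)

/-- The symmetric Toeplitz matrix `T_n = [t_{|i-j|}]` generated by `t`. -/
noncomputable def toeplitzMat (t : ℕ → ℝ) (n : ℕ) : Matrix (Fin n) (Fin n) ℝ :=
  Matrix.of fun i j => t (((i : ℤ) - (j : ℤ)).natAbs)

/-- The Hankel correction matrix `H_n` (1-based indices `i, j`):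
`[H_n]_{ij} = t_{i+j}` for `2 ≤ i+j ≤ n-1`, `0` for `n ≤ i+j ≤ n+2`,
and `t_{2n+2-(i+j)}` for `n+3 ≤ i+j ≤ 2n`. -/
noncomputable def hankelMat (t : ℕ → ℝ) (n : ℕ) : Matrix (Fin n) (Fin n) ℝ :=
  Matrix.of fun i j =>
    let s := (i : ℕ) + (j : ℕ) + 2
    if s ≤ n - 1 then t s else if s ≤ n + 2 then 0 else t (2 * n + 2 - s)

/-- The τ matrix `τ(T_n) = T_n - H_n`. -/
noncomputable def tauMat (t : ℕ → ℝ) (n : ℕ) : Matrix (Fin n) (Fin n) ℝ :=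
  toeplitzMat t n - hankelMat t n

open Matrix Kronecker

/-- `A = c_x (I_{n₂} ⊗ G_{n₁}^{(α₁)}) + c_y (G_{n₂}^{(α₂)} ⊗ I_{n₁})`. -/
noncomputable def Amat (α₁ α₂ : ℝ) (n₁ n₂ : ℕ) (cx cy : ℝ) :
    Matrix (Fin n₂ × Fin n₁) (Fin n₂ × Fin n₁) ℝ :=
  cx • ((1 : Matrix (Fin n₂) (Fin n₂) ℝ) ⊗ₖ Gmat α₁ n₁) +
    cy • (Gmat α₂ n₂ ⊗ₖ (1 : Matrix (Fin n₁) (Fin n₁) ℝ))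

/-- `τ₁(A) = c_x (I_{n₂} ⊗ τ(G_{n₁}^{(α₁)})) + c_y (τ(G_{n₂}^{(α₂)}) ⊗ I_{n₁})`. -/
noncomputable def tau1A (α₁ α₂ : ℝ) (n₁ n₂ : ℕ) (cx cy : ℝ) :
    Matrix (Fin n₂ × Fin n₁) (Fin n₂ × Fin n₁) ℝ :=
  cx • ((1 : Matrix (Fin n₂) (Fin n₂) ℝ) ⊗ₖ tauMat (gSymb α₁) n₁) +
    cy • (tauMat (gSymb α₂) n₂ ⊗ₖ (1 : Matrix (Fin n₁) (Fin n₁) ℝ))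

/-!
Write `H = A - τ₁(A)` for the Kronecker-assembled Hankel corrections. Then
`2M - P = I + D - (A + H)` and `3P - 2M = I + D - (A - 3H)`, so both bounds follow once
`I + D - (A + εH)` is positive definite for `ε ∈ [-3, 1]`: for an eigenpair `M z = μ P z` the
Rayleigh quotients give `z*(M - P/2)z = (μ - 1/2) z*Pz` and `z*(3P/2 - M)z = (3/2 - μ) z*Pz`.
By the Kronecker structure it suffices that each one-dimensional `G + εH` is negative
semidefinite. Since `0 ≤ H`, and `H ≤ G` off the diagonal, `|G + εH| ≤ G + H` off the diagonal,
so a Gershgorin-type estimate reduces everything to the row sums of `G + H`. Each is at most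
`∑_{|k| < n} G_{|k|}`, which is `2 (g₀ + ⋯ + gₙ) < 0` for `n ≥ 2` (and `2g₁ < 0` for `n = 1`).
-/

open Finset

namespace Matrix

variable {ι : Type*} [Fintype ι]

lemma dotProduct_mulVec_le_of_abs_le {B C : Matrix ι ι ℝ} (hC : C.IsSymm)
    (hoff : ∀ i j, i ≠ j → |B i j| ≤ C i j) (hdiag : ∀ i, B i i ≤ C i i) (x : ι → ℝ) :
    x ⬝ᵥ (B *ᵥ x) ≤ ∑ i, (∑ j, C i j) * x i ^ 2 := by
  have hterm : ∀ i j, x i * (B i j * x j) ≤ C i j * (x i ^ 2 + x j ^ 2) / 2 := by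
    intro i j
    rcases eq_or_ne i j with rfl | hij
    · nlinarith [hdiag i, sq_nonneg (x i)]
    · have hC0 : 0 ≤ C i j := (abs_nonneg _).trans (hoff i j hij)
      nlinarith [abs_le.1 (hoff i j hij), sq_nonneg (x i - x j), sq_nonneg (x i + x j)]
  calc x ⬝ᵥ (B *ᵥ x) = ∑ i, ∑ j, x i * (B i j * x j) := by
        simp only [dotProduct, mulVec, Finset.mul_sum]
    _ ≤ ∑ i, ∑ j, C i j * (x i ^ 2 + x j ^ 2) / 2 := by
        gcongr with i _ j _; exact hterm i j
    _ = ∑ i, (∑ j, C i j) * x i ^ 2 := by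
        simp only [mul_add, add_div, Finset.sum_add_distrib]
        rw [Finset.sum_comm (f := fun i j => C i j * x j ^ 2 / 2)]
        simp only [fun i j => hC.apply j i, ← Finset.sum_add_distrib, Finset.sum_mul]
        refine Finset.sum_congr rfl fun i _ => Finset.sum_congr rfl fun j _ => ?_
        ring

lemma star_dotProduct_map_ofReal_mulVec {A : Matrix ι ι ℝ} (hA : A.IsSymm) (z : ι → ℂ) :
    star z ⬝ᵥ (A.map ((↑) : ℝ → ℂ) *ᵥ z)
      = ↑((fun i => (z i).re) ⬝ᵥ (A *ᵥ fun i => (z i).re)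
          + (fun i => (z i).im) ⬝ᵥ (A *ᵥ fun i => (z i).im)) := by
  apply Complex.ext
  · simp only [dotProduct, mulVec, Complex.re_sum, Complex.ofReal_re, Pi.star_apply, map_apply,
      Finset.mul_sum, ← Finset.sum_add_distrib]
    refine Finset.sum_congr rfl fun i _ => Finset.sum_congr rfl fun j _ => ?_
    simp only [Complex.mul_re, Complex.mul_im, Complex.star_def, Complex.conj_re, Complex.conj_im,
      Complex.ofReal_re, Complex.ofReal_im]
    ring
  · have hswap : ∑ i, ∑ j, (z i).re * (A i j * (z j).im)
        = ∑ i, ∑ j, (z i).im * (A i j * (z j).re) := by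
      rw [Finset.sum_comm]
      refine Finset.sum_congr rfl fun i _ => Finset.sum_congr rfl fun j _ => ?_
      rw [hA.apply i j]; ring
    simp only [dotProduct, mulVec, Complex.im_sum, Complex.ofReal_im, Pi.star_apply, map_apply,
      Complex.mul_re, Complex.mul_im, Complex.star_def, Complex.conj_re, Complex.conj_im,
      Complex.ofReal_re, Complex.ofReal_im, zero_mul, add_zero, sub_zero, Finset.mul_sum, neg_mul,
      Finset.sum_add_distrib, Finset.sum_neg_distrib, hswap, add_neg_cancel]

open scoped ComplexOrder

lemma PosDef.map_ofReal {A : Matrix ι ι ℝ} (hA : A.PosDef) : (A.map ((↑) : ℝ → ℂ)).PosDef := by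
  refine PosDef.of_dotProduct_mulVec_pos
    (hA.isHermitian.map _ fun r => (Complex.conj_ofReal r).symm) fun z hz => ?_
  rw [star_dotProduct_map_ofReal_mulVec (isHermitian_iff_isSymm.1 hA.isHermitian),
    Complex.zero_lt_real]
  have hpos : ∀ x : ι → ℝ, x ≠ 0 → 0 < x ⬝ᵥ (A *ᵥ x) := fun x hx => by
    simpa only [star_trivial] using hA.dotProduct_mulVec_pos hx
  have hnonneg : ∀ x : ι → ℝ, 0 ≤ x ⬝ᵥ (A *ᵥ x) := fun x => by
    simpa only [star_trivial] using hA.posSemidef.dotProduct_mulVec_nonneg x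
  by_cases hre : (fun i => (z i).re) = 0
  · have him : (fun i => (z i).im) ≠ 0 := fun him =>
      hz (funext fun i => Complex.ext (congrFun hre i) (congrFun him i))
    exact add_pos_of_nonneg_of_pos (hnonneg _) (hpos _ him)
  · exact add_pos_of_pos_of_nonneg (hpos _ hre) (hnonneg _)

theorem eigenvalue_mem_Ioo_of_posDef [DecidableEq ι] {M P : Matrix ι ι ℝ} {a b : ℝ} (hab : a < b)
    (ha : (M - a • P).PosDef) (hb : (b • P - M).PosDef) {μ : ℂ} {z : ι → ℂ} (hz : z ≠ 0)
    (h : (P⁻¹ * M).map ((↑) : ℝ → ℂ) *ᵥ z = μ • z) : μ.im = 0 ∧ a < μ.re ∧ μ.re < b := by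
  have hP : P.PosDef := by
    convert (ha.add hb).smul (inv_pos.2 (sub_pos.2 hab)) using 1
    rw [show M - a • P + (b • P - M) = (b - a) • P by module, smul_smul,
      inv_mul_cancel₀ (sub_ne_zero.2 hab.ne'), one_smul]
  have hMz : M.map ((↑) : ℝ → ℂ) *ᵥ z = μ • (P.map ((↑) : ℝ → ℂ) *ᵥ z) := by
    have hPM : P * (P⁻¹ * M) = M := by
      rw [← mul_assoc, mul_nonsing_inv _ ((isUnit_iff_isUnit_det P).1 hP.isUnit), one_mul]
    rw [← mulVec_smul (P.map ((↑) : ℝ → ℂ)) μ z, ← h, mulVec_mulVec]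
    congr 1
    have := Matrix.map_mul (L := P) (M := P⁻¹ * M) (f := Complex.ofRealHom)
    rwa [hPM] at this
  set p := star z ⬝ᵥ (P.map ((↑) : ℝ → ℂ) *ᵥ z)
  have hp : 0 < p := hP.map_ofReal.dotProduct_mulVec_pos hz
  have hM : star z ⬝ᵥ (M.map ((↑) : ℝ → ℂ) *ᵥ z) = μ * p := by
    rw [hMz, dotProduct_smul, smul_eq_mul]
  have hlow : 0 < μ - a := by
    refine (pos_iff_pos_of_mul_pos ?_).2 hp
    have hmap : (M - a • P).map ((↑) : ℝ → ℂ) = M.map (↑) - a • P.map (↑) := by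
      ext; simp
    simpa [hmap, sub_mulVec, smul_mulVec, dotProduct_sub, dotProduct_smul, Complex.real_smul,
      hM, sub_mul] using ha.map_ofReal.dotProduct_mulVec_pos hz
  have hup : 0 < b - μ := by
    refine (pos_iff_pos_of_mul_pos ?_).2 hp
    have hmap : (b • P - M).map ((↑) : ℝ → ℂ) = b • P.map (↑) - M.map (↑) := by
      ext; simp
    simpa [hmap, sub_mulVec, smul_mulVec, dotProduct_sub, dotProduct_smul, Complex.real_smul,
      hM, sub_mul] using hb.map_ofReal.dotProduct_mulVec_pos hz
  rw [Complex.lt_def] at hlow hup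
  simp only [Complex.zero_re, Complex.zero_im, Complex.sub_re, Complex.sub_im, Complex.ofReal_re,
    Complex.ofReal_im] at hlow hup
  exact ⟨by linarith, by linarith, by linarith⟩

end Matrix

section GrunwaldLetnikov

variable {α : ℝ}

lemma g_one : g α 1 = -α := by
  simp [g]

lemma g_two : g α 2 = α * (α - 1) / 2 := by
  rw [g, g_one]; push_cast; ring

lemma g_pos (h₁ : 1 < α) (h₂ : α < 2) {l : ℕ} (hl : 2 ≤ l) : 0 < g α l := by
  induction l, hl using Nat.le_induction with
  | base => rw [g_two]; nlinarith
  | succ l hl ih =>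
    have hl' : (2 : ℝ) ≤ l := by exact_mod_cast hl
    refine mul_pos ?_ ih
    rw [sub_pos, div_lt_one (by positivity)]
    linarith

lemma g_succ_le (h₁ : 1 < α) (h₂ : α < 2) {l : ℕ} (hl : 2 ≤ l) : g α (l + 1) ≤ g α l := by
  have hl' : (2 : ℝ) ≤ l := by exact_mod_cast hl
  have : 0 ≤ (α + 1) / ((l : ℝ) + 1) := by positivity
  rw [g]
  nlinarith [g_pos h₁ h₂ hl]

lemma g_eq_neg_mul_sum_range {m : ℕ} (hm : 1 ≤ m) :
    g α m = -(α / m) * ∑ l ∈ range m, g α l := by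
  induction m, hm using Nat.le_induction with
  | base => simp [g]
  | succ m hm ih =>
    have : (m : ℝ) ≠ 0 := by positivity
    rw [g, sum_range_succ, ih]
    push_cast
    field_simp
    ring

lemma sum_range_g_neg (h₁ : 1 < α) (h₂ : α < 2) {m : ℕ} (hm : 2 ≤ m) :
    ∑ l ∈ range m, g α l < 0 := by
  induction m, hm using Nat.le_induction with
  | base =>
    rw [sum_range_succ, sum_range_one, g_one]
    show 1 + -α < 0
    linarith
  | succ m hm ih =>
    have hm' : (2 : ℝ) ≤ m := by exact_mod_cast hm
    rw [sum_range_succ, g_eq_neg_mul_sum_range (by omega),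
      show ∀ s : ℝ, s + -(α / m) * s = s * (1 - α / m) by intro s; ring]
    refine mul_neg_of_neg_of_pos ih ?_
    rw [sub_pos, div_lt_one (by positivity)]
    linarith

lemma gSymb_pos (h₁ : 1 < α) (h₂ : α < 2) {d : ℕ} (hd : 1 ≤ d) : 0 < gSymb α d := by
  match d, hd with
  | 1, _ => simp only [gSymb, g]; nlinarith
  | d + 2, _ => exact g_pos h₁ h₂ (by omega)

lemma gSymb_antitoneOn (h₁ : 1 < α) (h₂ : α < 2) : AntitoneOn (gSymb α) {d | 1 ≤ d} := by
  refine antitoneOn_nat_Ici_of_succ_le fun d hd => ?_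
  match d, hd with
  | 1, _ =>
    show g α 3 ≤ g α 0 + g α 2
    linarith [g_succ_le h₁ h₂ (le_refl 2), show g α 0 = 1 from rfl]
  | d + 2, _ => exact g_succ_le h₁ h₂ (by omega)

lemma sum_Icc_neg_natAbs_succ (f : ℕ → ℝ) (N : ℕ) :
    ∑ k ∈ Icc (-(N + 1 : ℤ)) (N + 1), f k.natAbs
      = ∑ k ∈ Icc (-(N : ℤ)) N, f k.natAbs + 2 * f (N + 1) := by
  have hsplit : Icc (-(N + 1 : ℤ)) (N + 1)
      = insert (-(N + 1 : ℤ)) (insert (N + 1 : ℤ) (Icc (-(N : ℤ)) N)) := by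
    ext k; simp only [mem_Icc, mem_insert]; omega
  rw [hsplit, sum_insert (by simp only [mem_insert, mem_Icc]; omega), sum_insert (by simp)]
  have h1 : (-(N + 1 : ℤ)).natAbs = N + 1 := by omega
  have h2 : ((N : ℤ) + 1).natAbs = N + 1 := by omega
  rw [h1, h2]; ring

lemma sum_Icc_gSymb_eq (N : ℕ) :
    ∑ k ∈ Icc (-(N + 1 : ℤ)) (N + 1), gSymb α k.natAbs = 2 * ∑ l ∈ range (N + 3), g α l := by
  induction N with
  | zero =>
    rw [sum_Icc_neg_natAbs_succ]
    simp only [Nat.cast_zero, neg_zero, Icc_self, sum_singleton, Int.natAbs_zero, zero_add,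
      sum_range_succ, range_zero, sum_empty, gSymb]
    ring
  | succ N ih =>
    have h := sum_Icc_neg_natAbs_succ (gSymb α) (N + 1)
    push_cast at h ⊢
    rw [h, ih, sum_range_succ _ (N + 3)]
    simp only [gSymb]
    ring

lemma sum_Icc_gSymb_neg (h₁ : 1 < α) (h₂ : α < 2) (N : ℕ) :
    ∑ k ∈ Icc (-(N : ℤ)) N, gSymb α k.natAbs < 0 := by
  cases N with
  | zero =>
    simp only [Nat.cast_zero, neg_zero, Icc_self, sum_singleton, Int.natAbs_zero, gSymb, g_one]
    linarith
  | succ N =>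
    push_cast
    rw [sum_Icc_gSymb_eq]
    linarith [sum_range_g_neg h₁ h₂ (m := N + 3) (by omega)]

end GrunwaldLetnikov

section ToeplitzHankel

variable {t : ℕ → ℝ} {n : ℕ}

lemma toeplitzMat_isSymm : (toeplitzMat t n).IsSymm := by
  ext i j
  simp only [Matrix.transpose_apply, toeplitzMat, Matrix.of_apply]
  congr 1
  omega

lemma hankelMat_isSymm : (hankelMat t n).IsSymm := by
  ext i j
  simp only [Matrix.transpose_apply, hankelMat, Matrix.of_apply, add_comm (j : ℕ)]

lemma hankelMat_nonneg (ht : ∀ k, 1 ≤ k → 0 ≤ t k) (i j : Fin n) : 0 ≤ hankelMat t n i j := by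
  simp only [hankelMat, Matrix.of_apply]
  split_ifs
  · exact ht _ (by omega)
  · exact le_rfl
  · exact ht _ (by omega)

lemma hankelMat_le_toeplitzMat (ht₀ : ∀ k, 1 ≤ k → 0 ≤ t k) (ht : AntitoneOn t {k | 1 ≤ k})
    {i j : Fin n} (hij : i ≠ j) :
    hankelMat t n i j ≤ toeplitzMat t n i j := by
  have hij' : (i : ℕ) ≠ j := Fin.val_ne_of_ne hij
  have hi := i.isLt
  have hj := j.isLt
  simp only [hankelMat, toeplitzMat, Matrix.of_apply]
  split_ifs
  · exact ht (show 1 ≤ _ by omega) (show 1 ≤ _ by omega) (by omega)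
  · exact ht₀ _ (by omega)
  · exact ht (show 1 ≤ _ by omega) (show 1 ≤ _ by omega) (by omega)

/-- Row `i` of the Hankel part is the Toeplitz row `k ↦ t |k - i|` read at the reflected columns
`-j-2` and `2n-j`; the offsets met along the whole row are distinct and lie in `[-(n-1), n-1]`. -/
lemma sum_toeplitzMat_add_hankelMat_le (ht₀ : ∀ k, 1 ≤ k → 0 ≤ t k) (i : Fin n) :
    ∑ j, (toeplitzMat t n i j + hankelMat t n i j)
      ≤ ∑ k ∈ Icc (-((n - 1 : ℕ) : ℤ)) (n - 1 : ℕ), t k.natAbs := by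
  classical
  have hi := i.isLt
  let offset : Fin n ⊕ Fin n → ℤ := Sum.elim (fun j => (j : ℤ) - i)
    (fun j => if (i : ℕ) + j + 2 ≤ n - 1 then -((i : ℤ) + j + 2) else 2 * n - i - j)
  let s := (univ : Finset (Fin n ⊕ Fin n)).filter <| Sum.elim (fun _ => True)
    fun j : Fin n => (i : ℕ) + j + 2 ≤ n - 1 ∨ n + 2 < (i : ℕ) + j + 2
  have hinj : Set.InjOn offset s := by
    rintro (j | j) hu (j' | j') hv huv <;>
      simp only [s, coe_filter, Set.mem_ofPred_eq, mem_univ, true_and, Sum.elim_inr] at hu hv <;>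
      simp only [offset, Sum.elim_inl, Sum.elim_inr, Sum.inl.injEq, Sum.inr.injEq, reduceCtorEq,
        Fin.ext_iff] at huv ⊢ <;>
      have := j.isLt <;> have := j'.isLt <;> (try split_ifs at huv) <;> omega
  calc ∑ j, (toeplitzMat t n i j + hankelMat t n i j)
      = ∑ u, Sum.elim (toeplitzMat t n i) (hankelMat t n i) u := by
        rw [Fintype.sum_sum_type, sum_add_distrib]; rfl
    _ = ∑ u ∈ s, Sum.elim (toeplitzMat t n i) (hankelMat t n i) u := by
        refine (sum_filter_of_ne fun u _ hu => ?_).symm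
        rcases u with j | j
        · trivial
        · contrapose! hu
          simp only [Sum.elim_inr, not_or, not_le, not_lt] at hu
          simp only [Sum.elim_inr, hankelMat, Matrix.of_apply]
          rw [if_neg (by omega), if_pos (by omega)]
    _ = ∑ u ∈ s, t (offset u).natAbs := by
        refine sum_congr rfl fun u hu => ?_
        rcases u with j | j
        · simp only [Sum.elim_inl, toeplitzMat, Matrix.of_apply, offset]
          congr 1; omega
        · have hj := j.isLt
          simp only [s, mem_filter, mem_univ, true_and, Sum.elim_inr] at hu
          simp only [Sum.elim_inr, hankelMat, Matrix.of_apply, offset]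
          split_ifs <;> first | omega | (congr 1 <;> omega)
    _ = ∑ k ∈ s.image offset, t k.natAbs :=
        (sum_image (f := fun k : ℤ => t k.natAbs) hinj).symm
    _ ≤ ∑ k ∈ Icc (-((n - 1 : ℕ) : ℤ)) (n - 1 : ℕ), t k.natAbs := by
        refine sum_le_sum_of_subset_of_nonneg ?_ fun k _ hk => ht₀ _ ?_
        · intro k hk
          obtain ⟨u | u, hu, rfl⟩ := mem_image.1 hk <;>
            simp only [s, mem_filter, mem_univ, true_and, Sum.elim_inr] at hu <;>
            have := u.isLt <;> simp only [offset, Sum.elim_inl, Sum.elim_inr, mem_Icc] <;>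
            (try split_ifs) <;> omega
        · by_contra h0
          refine hk (mem_image.2 ⟨.inl i, by simp [s], ?_⟩)
          simp only [offset, Sum.elim_inl]; omega

lemma posSemidef_neg_toeplitzMat_add_smul_hankelMat (ht₀ : ∀ k, 1 ≤ k → 0 ≤ t k)
    (ht : AntitoneOn t {k | 1 ≤ k})
    (hsum : ∑ k ∈ Icc (-((n - 1 : ℕ) : ℤ)) (n - 1 : ℕ), t k.natAbs ≤ 0)
    {ε : ℝ} (hε : ε ∈ Set.Icc (-3) 1) :
    (-(toeplitzMat t n + ε • hankelMat t n)).PosSemidef := by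
  obtain ⟨hε₁, hε₂⟩ := hε
  have hsymm : (toeplitzMat t n + ε • hankelMat t n).IsSymm :=
    toeplitzMat_isSymm.add (hankelMat_isSymm.smul ε)
  refine PosSemidef.of_dotProduct_mulVec_nonneg
    (isHermitian_iff_isSymm.2 hsymm.neg) fun x => ?_
  have hbound := dotProduct_mulVec_le_of_abs_le (toeplitzMat_isSymm.add hankelMat_isSymm)
    (B := toeplitzMat t n + ε • hankelMat t n)
    (fun i j hij => abs_le.2 (by
      have h₀ := hankelMat_nonneg ht₀ i j
      have h₁ := hankelMat_le_toeplitzMat ht₀ ht hij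
      simp only [Matrix.add_apply, Matrix.smul_apply, smul_eq_mul]
      constructor <;> nlinarith))
    (fun i => by
      have h₀ := hankelMat_nonneg ht₀ i i
      simp only [Matrix.add_apply, Matrix.smul_apply, smul_eq_mul]
      nlinarith) x
  have hrows : ∑ i, (∑ j, (toeplitzMat t n + hankelMat t n) i j) * x i ^ 2 ≤ 0 :=
    sum_nonpos fun i _ => mul_nonpos_of_nonpos_of_nonneg
      ((sum_toeplitzMat_add_hankelMat_le ht₀ i).trans hsum) (sq_nonneg _)
  simp only [star_trivial, neg_mulVec, dotProduct_neg]
  linarith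

end ToeplitzHankel

section Kronecker

lemma Amat_add_smul_sub_tau1A (α₁ α₂ : ℝ) (n₁ n₂ : ℕ) (cx cy ε : ℝ) :
    Amat α₁ α₂ n₁ n₂ cx cy + ε • (Amat α₁ α₂ n₁ n₂ cx cy - tau1A α₁ α₂ n₁ n₂ cx cy)
      = cx • (1 ⊗ₖ (toeplitzMat (gSymb α₁) n₁ + ε • hankelMat (gSymb α₁) n₁))
        + cy • ((toeplitzMat (gSymb α₂) n₂ + ε • hankelMat (gSymb α₂) n₂) ⊗ₖ 1) := by
  ext
  simp only [Amat, tau1A, tauMat, Gmat, toeplitzMat, kroneckerMap_apply, Matrix.add_apply,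
    Matrix.sub_apply, Matrix.smul_apply, smul_eq_mul]
  ring

variable {m n : Type*} [Fintype m] [Fintype n] [DecidableEq m] [DecidableEq n]

lemma posDef_one_add_diagonal_sub_kronecker {d : m × n → ℝ} (hd : ∀ i, 0 ≤ d i)
    {cx cy : ℝ} (hcx : 0 ≤ cx) (hcy : 0 ≤ cy) {B₁ : Matrix n n ℝ} {B₂ : Matrix m m ℝ}
    (h₁ : (-B₁).PosSemidef) (h₂ : (-B₂).PosSemidef) :
    (1 + diagonal d - (cx • (1 ⊗ₖ B₁) + cy • (B₂ ⊗ₖ 1))).PosDef := by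
  have h : 1 + diagonal d - (cx • (1 ⊗ₖ B₁) + cy • (B₂ ⊗ₖ 1))
      = 1 + (diagonal d + (cx • (1 ⊗ₖ (-B₁)) + cy • ((-B₂) ⊗ₖ 1))) := by
    ext; simp only [kroneckerMap_apply, Matrix.add_apply, Matrix.sub_apply, Matrix.smul_apply,
      Matrix.neg_apply, smul_eq_mul]; ring
  rw [h]
  exact PosDef.one.add_posSemidef <| (PosSemidef.diagonal fun i => hd i).add <|
    ((PosSemidef.one.kronecker h₁).smul hcx).add ((h₂.kronecker PosSemidef.one).smul hcy)

end Kronecker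

lemma posSemidef_neg_toeplitzMat_gSymb_add_smul_hankelMat {α : ℝ} (h₁ : 1 < α) (h₂ : α < 2)
    (n : ℕ) {ε : ℝ} (hε : ε ∈ Set.Icc (-3) 1) :
    (-(toeplitzMat (gSymb α) n + ε • hankelMat (gSymb α) n)).PosSemidef :=
  posSemidef_neg_toeplitzMat_add_smul_hankelMat (fun _ hk => (gSymb_pos h₁ h₂ hk).le)
    (gSymb_antitoneOn h₁ h₂) (sum_Icc_gSymb_neg h₁ h₂ _).le hε

theorem stmt18_general (α₁ α₂ : ℝ) (hα₁ : 1 < α₁ ∧ α₁ < 2) (hα₂ : 1 < α₂ ∧ α₂ < 2)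
    (n₁ n₂ : ℕ) (cx cy : ℝ) (hcx : 0 < cx) (hcy : 0 < cy)
    (d : Fin n₂ × Fin n₁ → ℝ) (hd : ∀ i, 0 ≤ d i)
    (M P : Matrix (Fin n₂ × Fin n₁) (Fin n₂ × Fin n₁) ℝ)
    (hM : M = 1 - Amat α₁ α₂ n₁ n₂ cx cy + Matrix.diagonal d)
    (hP : P = 1 - tau1A α₁ α₂ n₁ n₂ cx cy + Matrix.diagonal d) :
    ∀ (μ : ℂ) (z : Fin n₂ × Fin n₁ → ℂ), z ≠ 0 →
      ((P⁻¹ * M).map (fun a : ℝ => (a : ℂ))) *ᵥ z = μ • z →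
      μ.im = 0 ∧ 1 / 2 < μ.re ∧ μ.re < 3 / 2 := by
  intro μ z hz h
  set A := Amat α₁ α₂ n₁ n₂ cx cy
  have hpos : ∀ ε ∈ Set.Icc (-3 : ℝ) 1,
      (1 + diagonal d - (A + ε • (A - tau1A α₁ α₂ n₁ n₂ cx cy))).PosDef := fun ε hε => by
    rw [Amat_add_smul_sub_tau1A]
    exact posDef_one_add_diagonal_sub_kronecker hd hcx.le hcy.le
      (posSemidef_neg_toeplitzMat_gSymb_add_smul_hankelMat hα₁.1 hα₁.2 n₁ hε)
      (posSemidef_neg_toeplitzMat_gSymb_add_smul_hankelMat hα₂.1 hα₂.2 n₂ hε)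
  refine eigenvalue_mem_Ioo_of_posDef (a := 1 / 2) (b := 3 / 2) (by norm_num) ?_ ?_ hz h
  · convert (hpos 1 (by norm_num)).smul (by norm_num : (0 : ℝ) < 1 / 2) using 1
    rw [hM, hP]
    module
  · convert (hpos (-3) (by norm_num)).smul (by norm_num : (0 : ℝ) < 1 / 2) using 1
    rw [hM, hP]
    module

theorem stmt18 (α₁ α₂ : ℝ) (hα₁ : 1 < α₁ ∧ α₁ < 2) (hα₂ : 1 < α₂ ∧ α₂ < 2)
    (n₁ n₂ : ℕ) (hn₁ : 1 ≤ n₁) (hn₂ : 1 ≤ n₂) (cx cy : ℝ) (hcx : 0 < cx) (hcy : 0 < cy)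
    (d : Fin n₂ × Fin n₁ → ℝ) (hd : ∀ i, 0 ≤ d i)
    (M P : Matrix (Fin n₂ × Fin n₁) (Fin n₂ × Fin n₁) ℝ)
    (hM : M = 1 - Amat α₁ α₂ n₁ n₂ cx cy + Matrix.diagonal d)
    (hP : P = 1 - tau1A α₁ α₂ n₁ n₂ cx cy + Matrix.diagonal d) :
    ∀ (μ : ℂ) (z : Fin n₂ × Fin n₁ → ℂ), z ≠ 0 →
      ((P⁻¹ * M).map (fun a : ℝ => (a : ℂ))) *ᵥ z = μ • z →
      μ.im = 0 ∧ 1 / 2 < μ.re ∧ μ.re < 3 / 2 :=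
  stmt18_general α₁ α₂ hα₁ hα₂ n₁ n₂ cx cy hcx hcy d hd M P hM hP
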